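/- Let f_k and T_k be finite real sequences with Std{f_k} > 0, and suppose the decoupling identities Cov{f_k, T_k} = 0 and Cov{f_k², T_k} = 0 hold for the empirical covariance. Then the quantity Ω₂ := Std{f_k}·(1/K)Σ_k T_k − ρ(f_k, f_k T_k)·Std{f_k T_k} equals zero, where Std{a} := √Var{a} and ρ(a,b) := Cov{a,b}/(Std{a}·Std{b}), assuming Std{f_k T_k} > 0. -/
import Mathlib


open Finset

/-- Empirical (biased) covariance of two finite real sequences. -/
noncomputable def empCov {K : ℕ} (a b : Fin K → ℝ) : ℝ :=
  (∑ k, a k * b k) / K - ((∑ k, a k) / K) * ((∑ k, b k) / K)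

/-- Empirical (biased) variance. -/
noncomputable def empVar {K : ℕ} (a : Fin K → ℝ) : ℝ := empCov a a

/-- Empirical standard deviation. -/
noncomputable def empStd {K : ℕ} (a : Fin K → ℝ) : ℝ := Real.sqrt (empVar a)

/-- Empirical correlation coefficient. -/
noncomputable def empRho {K : ℕ} (a b : Fin K → ℝ) : ℝ :=
  empCov a b / (empStd a * empStd b)

/-- Under the decoupling assumptions, the quantity
`Ω₂ = Std{f}·(1/K)ΣT − ρ(f, fT)·Std{fT}` vanishes. -/
theorem omega_two_eq_zero {K : ℕ} (hK : 0 < K) (f T : Fin K → ℝ)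
    (hf : 0 < empStd f) (hfT : 0 < empStd (fun k => f k * T k))
    (h1 : empCov f T = 0) (h2 : empCov (fun k => f k ^ 2) T = 0) :
    empStd f * ((∑ k, T k) / K) -
      empRho f (fun k => f k * T k) * empStd (fun k => f k * T k) = 0 := by
  have hfne : empStd f ≠ 0 := ne_of_gt hf
  have hfTne : empStd (fun k => f k * T k) ≠ 0 := ne_of_gt hfT
  have hvar : empVar f = empStd f ^ 2 := by
    have h0 : 0 ≤ empVar f := by
      by_contra h
      push_neg at h
      have := Real.sqrt_eq_zero_of_nonpos (le_of_lt h)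
      rw [empStd] at hf
      linarith [hf, this]
    rw [empStd, Real.sq_sqrt h0]
  have hcov : empCov f (fun k => f k * T k) = empVar f * ((∑ k, T k) / K) := by
    have hfT' : (∑ k, f k * T k) / K = ((∑ k, f k) / K) * ((∑ k, T k) / K) := by
      have := h1
      unfold empCov at this
      linarith
    have hf2T : (∑ k, f k ^ 2 * T k) / K = ((∑ k, f k ^ 2) / K) * ((∑ k, T k) / K) := by
      have := h2
      unfold empCov at this
      linarith
    unfold empCov empVar empCov
    have e1 : (∑ k, f k * (f k * T k)) = ∑ k, f k ^ 2 * T k := by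
      apply Finset.sum_congr rfl; intro k _; ring
    have e2 : (∑ k, f k * f k) = ∑ k, f k ^ 2 := by
      apply Finset.sum_congr rfl; intro k _; ring
    rw [e1, e2, hf2T, hfT']
    ring
  unfold empRho
  rw [hcov, hvar]
  field_simp
  ring
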